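/- For a p-chain η : Σ_p → 𝔽₂, define the electric Wilson (logical-Z) operator W^r_η as the diagonal operator multiplying ψ(a,b,c) by (−1)^{Σ_{σ ∈ Σ_p} a(σ)·η(σ)}. Then W^r_η commutes with every flux operator and with every dressed Gauss operator of colours b and g, and W^r_η commutes with all dressed Gauss operators Ã^r_σ (σ ∈ Σ_{p−1}) if and only if ∂η = 0, where ∂ : (Σ_p → 𝔽₂) → (Σ_{p−1} → 𝔽₂) is the transpose of d (characterized by Σ_σ (dx)(σ)·y(σ) = Σ_σ x(σ)·(∂y)(σ)). Thus W^r_η commutes with every stabilizer generator exactly when η is a ℤ₂ cycle, so the Z-type logical operators of the twisted code are supported on cycles; the analogous statements hold for colours b and g. -/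
import Mathlib


noncomputable section

open scoped BigOperators

/-- Transport a cochain along an equality of degrees. -/
def cellCast {cells : ℕ → Type} {i j : ℕ} (h : i = j) (x : cells i → ZMod 2) :
    cells j → ZMod 2 :=
  fun σ => x (cast (congrArg cells h.symm) σ)

/-- A *cochain system* of dimension `N` over `𝔽₂ = ZMod 2`: finite sets of cells in
each degree, `𝔽₂`-linear coboundary maps `d` with `d ∘ d = 0`, `𝔽₂`-bilinear associative
cup products satisfying the Leibniz rule, and an `𝔽₂`-linear integral on top-degree
cochains satisfying the Stokes identity.  (These are the structures carried by the `𝔽₂`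
cellular cochains of a closed Poincaré CW complex.) -/
structure CochainSystem (N : ℕ) where
  cells : ℕ → Type
  fintypeCells : ∀ i, Fintype (cells i)
  decEqCells : ∀ i, DecidableEq (cells i)
  d : ∀ i, (cells i → ZMod 2) →ₗ[ZMod 2] (cells (i + 1) → ZMod 2)
  cup : ∀ i j, (cells i → ZMod 2) →ₗ[ZMod 2]
    ((cells j → ZMod 2) →ₗ[ZMod 2] (cells (i + j) → ZMod 2))
  integ : (cells N → ZMod 2) →ₗ[ZMod 2] ZMod 2
  d_comp_d : ∀ (i : ℕ) (x : cells i → ZMod 2), d (i + 1) (d i x) = 0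
  cup_assoc : ∀ {i j k : ℕ} (u : cells i → ZMod 2) (v : cells j → ZMod 2)
    (w : cells k → ZMod 2),
    cup (i + j) k (cup i j u v) w
      = cellCast (Nat.add_assoc i j k).symm (cup i (j + k) u (cup j k v w))
  leibniz : ∀ {i j : ℕ} (u : cells i → ZMod 2) (v : cells j → ZMod 2),
    d (i + j) (cup i j u v)
      = cellCast (by omega : i + 1 + j = i + j + 1) (cup (i + 1) j (d i u) v)
        + cellCast (by omega : i + (j + 1) = i + j + 1) (cup i (j + 1) u (d j v))
  stokes : ∀ (k : ℕ) (hk : k + 1 = N) (w : cells k → ZMod 2),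
    integ (cellCast hk (d k w)) = 0

attribute [instance] CochainSystem.fintypeCells CochainSystem.decEqCells

namespace CochainSystem

variable {N : ℕ}

/-- The degree-`i` cochain space `Cⁱ`. -/
abbrev C (S : CochainSystem N) (i : ℕ) : Type := S.cells i → ZMod 2

/-- The indicator cochain `σ̃` of a cell `σ`. -/
def indicator (S : CochainSystem N) {i : ℕ} (σ : S.cells i) : S.C i :=
  fun τ => if τ = σ then 1 else 0

/-- `∫ (u ∪ v) ∪ w` when the degrees add up to `N`. -/
def integ3 (S : CochainSystem N) {i j k : ℕ} (h : i + j + k = N)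
    (u : S.C i) (v : S.C j) (w : S.C k) : ZMod 2 :=
  S.integ (cellCast h (S.cup (i + j) k (S.cup i j u v) w))

end CochainSystem

/-- The sign `(-1)ᵗ ∈ ℂ` of `t ∈ 𝔽₂`. -/
def sgn (t : ZMod 2) : ℂ := (-1 : ℂ) ^ t.val

open CochainSystem

section Twisted

variable {N p q s : ℕ}

/-- A configuration of `ℤ₂`-gauge fields for the three colours `r`, `b`, `g`. -/
abbrev Config (S : CochainSystem N) (p q s : ℕ) : Type :=
  S.C (p + 1) × S.C (q + 1) × S.C (s + 1)

/-- The three-colour qubit space `V = ((Cᵖ × C^q × C^s) → ℂ)` of the twisted code. -/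
abbrev QSpace (S : CochainSystem N) (p q s : ℕ) : Type := Config S p q s → ℂ

/-- The dressed Gauss operator `Ã^r_σ` of the twisted code:
`(Ã^r_σ ψ)(a,b,c) = (−1)^{∫ σ̃ ∪ b ∪ c} ψ(a + dσ̃, b, c)`. -/
def gaussR (S : CochainSystem N) (h : p + 1 + (q + 1) + (s + 1) = N + 1)
    (σ : S.cells p) : QSpace S p q s → QSpace S p q s :=
  fun ψ x =>
    sgn (S.integ3 (show p + (q + 1) + (s + 1) = N by omega) (S.indicator σ) x.2.1 x.2.2)
      * ψ (x.1 + S.d p (S.indicator σ), x.2.1, x.2.2)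

/-- The dressed Gauss operator `Ã^b_ξ`:
`(Ã^b_ξ ψ)(a,b,c) = (−1)^{∫ a ∪ ξ̃ ∪ c} ψ(a, b + dξ̃, c)`. -/
def gaussB (S : CochainSystem N) (h : p + 1 + (q + 1) + (s + 1) = N + 1)
    (ξ : S.cells q) : QSpace S p q s → QSpace S p q s :=
  fun ψ x =>
    sgn (S.integ3 (show p + 1 + q + (s + 1) = N by omega) x.1 (S.indicator ξ) x.2.2)
      * ψ (x.1, x.2.1 + S.d q (S.indicator ξ), x.2.2)

/-- The dressed Gauss operator `Ã^g_ζ`: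
`(Ã^g_ζ ψ)(a,b,c) = (−1)^{∫ a ∪ b ∪ ζ̃} ψ(a, b, c + dζ̃)`. -/
def gaussG (S : CochainSystem N) (h : p + 1 + (q + 1) + (s + 1) = N + 1)
    (ζ : S.cells s) : QSpace S p q s → QSpace S p q s :=
  fun ψ x =>
    sgn (S.integ3 (show p + 1 + (q + 1) + s = N by omega) x.1 x.2.1 (S.indicator ζ))
      * ψ (x.1, x.2.1, x.2.2 + S.d s (S.indicator ζ))

/-- The diagonal flux operator `B^r_τ`, multiplying `ψ(a,b,c)` by `(−1)^{(da)(τ)}`. -/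
def fluxR (S : CochainSystem N) (p q s : ℕ) (τ : S.cells (p + 2)) :
    QSpace S p q s → QSpace S p q s :=
  fun ψ x => sgn (S.d (p + 1) x.1 τ) * ψ x

/-- The diagonal flux operator `B^b_τ′`, multiplying `ψ(a,b,c)` by `(−1)^{(db)(τ′)}`. -/
def fluxB (S : CochainSystem N) (p q s : ℕ) (τ' : S.cells (q + 2)) :
    QSpace S p q s → QSpace S p q s :=
  fun ψ x => sgn (S.d (q + 1) x.2.1 τ') * ψ x

/-- The diagonal flux operator `B^g_τ″`, multiplying `ψ(a,b,c)` by `(−1)^{(dc)(τ″)}`. -/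
def fluxG (S : CochainSystem N) (p q s : ℕ) (τ'' : S.cells (s + 2)) :
    QSpace S p q s → QSpace S p q s :=
  fun ψ x => sgn (S.d (s + 1) x.2.2 τ'') * ψ x

/-- The zero-flux subspace: vectors supported on flat (cocycle) configurations. -/
def ZeroFlux (S : CochainSystem N) (p q s : ℕ) : Set (QSpace S p q s) :=
  {ψ | ∀ x : Config S p q s, ψ x ≠ 0 →
    S.d (p + 1) x.1 = 0 ∧ S.d (q + 1) x.2.1 = 0 ∧ S.d (s + 1) x.2.2 = 0}

/-- The code space of the twisted code: vectors fixed by every dressed Gauss operator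
and every flux operator. -/
def CodeSpace (S : CochainSystem N) (h : p + 1 + (q + 1) + (s + 1) = N + 1) :
    Set (QSpace S p q s) :=
  {ψ | (∀ σ : S.cells p, gaussR S h σ ψ = ψ)
    ∧ (∀ ξ : S.cells q, gaussB S h ξ ψ = ψ)
    ∧ (∀ ζ : S.cells s, gaussG S h ζ ψ = ψ)
    ∧ (∀ τ : S.cells (p + 2), fluxR S p q s τ ψ = ψ)
    ∧ (∀ τ' : S.cells (q + 2), fluxB S p q s τ' ψ = ψ)
    ∧ (∀ τ'' : S.cells (s + 2), fluxG S p q s τ'' ψ = ψ)}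

/-- The set of stabilizer generators of the twisted code. -/
def Stabilizer (S : CochainSystem N) (h : p + 1 + (q + 1) + (s + 1) = N + 1) :
    Set (QSpace S p q s → QSpace S p q s) :=
  {O | (∃ σ, O = gaussR S h σ) ∨ (∃ ξ, O = gaussB S h ξ) ∨ (∃ ζ, O = gaussG S h ζ)
    ∨ (∃ τ, O = fluxR S p q s τ) ∨ (∃ τ', O = fluxB S p q s τ')
    ∨ (∃ τ'', O = fluxG S p q s τ'')}

end Twisted

/-- The boundary map `∂ : (Σ_{i+1} → 𝔽₂) → (Σ_i → 𝔽₂)`, the transpose of `d`: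
`(∂y)(σ) := Σ_τ (dσ̃)(τ) · y(τ)`. -/
def bdry {N : ℕ} (S : CochainSystem N) (i : ℕ) (y : S.C (i + 1)) : S.C i :=
  fun σ => ∑ τ : S.cells (i + 1), S.d i (S.indicator σ) τ * y τ

/-- The electric Wilson (logical-Z) operator `W^r_η` attached to a `p`-chain `η`,
multiplying `ψ(a,b,c)` by `(−1)^{Σ_σ a(σ)·η(σ)}`. -/
def wilsonR {N : ℕ} (S : CochainSystem N) (p q s : ℕ) (η : S.C (p + 1)) :
    QSpace S p q s → QSpace S p q s :=
  fun ψ x => sgn (∑ σ : S.cells (p + 1), x.1 σ * η σ) * ψ x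

/-- The blue electric Wilson operator `W^b_η`. -/
def wilsonB {N : ℕ} (S : CochainSystem N) (p q s : ℕ) (η : S.C (q + 1)) :
    QSpace S p q s → QSpace S p q s :=
  fun ψ x => sgn (∑ σ : S.cells (q + 1), x.2.1 σ * η σ) * ψ x

/-- The green electric Wilson operator `W^g_η`. -/
def wilsonG {N : ℕ} (S : CochainSystem N) (p q s : ℕ) (η : S.C (s + 1)) :
    QSpace S p q s → QSpace S p q s :=
  fun ψ x => sgn (∑ σ : S.cells (s + 1), x.2.2 σ * η σ) * ψ x

section Helpers

lemma zmod2_cases (t : ZMod 2) : t = 0 ∨ t = 1 := by revert t; decide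

lemma sgn_zero : sgn 0 = 1 := by simp [sgn]

lemma sgn_ne_zero (t : ZMod 2) : sgn t ≠ 0 := by
  rcases zmod2_cases t with h | h <;> subst h <;> simp [sgn]

lemma sgn_add (u v : ZMod 2) : sgn (u + v) = sgn u * sgn v := by
  rcases zmod2_cases u with h | h <;> rcases zmod2_cases v with h' | h' <;>
    subst h <;> subst h' <;> simp [sgn, (by decide : ((1 : ZMod 2) + 1) = 0), (by decide : (1 : ZMod 2).val = 1)] <;> norm_num

lemma sgn_eq_one_iff (t : ZMod 2) : sgn t = 1 ↔ t = 0 := by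
  rcases zmod2_cases t with h | h <;> subst h <;> simp [sgn, (by decide : (1 : ZMod 2).val = 1)] <;> norm_num

lemma transpose_d {N : ℕ} (S : CochainSystem N) (i : ℕ) (x : S.C i) (y : S.C (i + 1)) :
    (∑ τ : S.cells (i + 1), S.d i x τ * y τ) = ∑ σ : S.cells i, x σ * bdry S i y σ := by
  have hx : x = ∑ σ : S.cells i, x σ • S.indicator σ := by
    funext τ
    simp [CochainSystem.indicator, Finset.sum_apply, Pi.smul_apply, smul_eq_mul,
      Finset.sum_ite_eq]
  have hd : S.d i x = ∑ σ : S.cells i, x σ • S.d i (S.indicator σ) := by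
    conv_lhs => rw [hx]
    rw [map_sum]
    simp_rw [map_smul]
  simp only [hd, Finset.sum_apply, Pi.smul_apply, smul_eq_mul, Finset.sum_mul]
  rw [Finset.sum_comm]
  simp [bdry, Finset.mul_sum, mul_assoc]

variable {N p q s : ℕ}

lemma wR_fluxR (S : CochainSystem N) (η : S.C (p + 1)) (τ : S.cells (p + 2)) :
    wilsonR S p q s η ∘ fluxR S p q s τ = fluxR S p q s τ ∘ wilsonR S p q s η := by
  funext ψ x; simp only [Function.comp_apply, wilsonR, fluxR]; ring

lemma wR_fluxB (S : CochainSystem N) (η : S.C (p + 1)) (τ' : S.cells (q + 2)) :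
    wilsonR S p q s η ∘ fluxB S p q s τ' = fluxB S p q s τ' ∘ wilsonR S p q s η := by
  funext ψ x; simp only [Function.comp_apply, wilsonR, fluxB]; ring

lemma wR_fluxG (S : CochainSystem N) (η : S.C (p + 1)) (τ'' : S.cells (s + 2)) :
    wilsonR S p q s η ∘ fluxG S p q s τ'' = fluxG S p q s τ'' ∘ wilsonR S p q s η := by
  funext ψ x; simp only [Function.comp_apply, wilsonR, fluxG]; ring

lemma wB_fluxR (S : CochainSystem N) (η : S.C (q + 1)) (τ : S.cells (p + 2)) :
    wilsonB S p q s η ∘ fluxR S p q s τ = fluxR S p q s τ ∘ wilsonB S p q s η := by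
  funext ψ x; simp only [Function.comp_apply, wilsonB, fluxR]; ring

lemma wB_fluxB (S : CochainSystem N) (η : S.C (q + 1)) (τ' : S.cells (q + 2)) :
    wilsonB S p q s η ∘ fluxB S p q s τ' = fluxB S p q s τ' ∘ wilsonB S p q s η := by
  funext ψ x; simp only [Function.comp_apply, wilsonB, fluxB]; ring

lemma wB_fluxG (S : CochainSystem N) (η : S.C (q + 1)) (τ'' : S.cells (s + 2)) :
    wilsonB S p q s η ∘ fluxG S p q s τ'' = fluxG S p q s τ'' ∘ wilsonB S p q s η := by
  funext ψ x; simp only [Function.comp_apply, wilsonB, fluxG]; ring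

lemma wG_fluxR (S : CochainSystem N) (η : S.C (s + 1)) (τ : S.cells (p + 2)) :
    wilsonG S p q s η ∘ fluxR S p q s τ = fluxR S p q s τ ∘ wilsonG S p q s η := by
  funext ψ x; simp only [Function.comp_apply, wilsonG, fluxR]; ring

lemma wG_fluxB (S : CochainSystem N) (η : S.C (s + 1)) (τ' : S.cells (q + 2)) :
    wilsonG S p q s η ∘ fluxB S p q s τ' = fluxB S p q s τ' ∘ wilsonG S p q s η := by
  funext ψ x; simp only [Function.comp_apply, wilsonG, fluxB]; ring

lemma wG_fluxG (S : CochainSystem N) (η : S.C (s + 1)) (τ'' : S.cells (s + 2)) :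
    wilsonG S p q s η ∘ fluxG S p q s τ'' = fluxG S p q s τ'' ∘ wilsonG S p q s η := by
  funext ψ x; simp only [Function.comp_apply, wilsonG, fluxG]; ring

variable (h : p + 1 + (q + 1) + (s + 1) = N + 1)

lemma wR_gaussB (S : CochainSystem N) (η : S.C (p + 1)) (ξ : S.cells q) :
    wilsonR S p q s η ∘ gaussB S h ξ = gaussB S h ξ ∘ wilsonR S p q s η := by
  funext ψ x; simp only [Function.comp_apply, wilsonR, gaussB]; ring

lemma wR_gaussG (S : CochainSystem N) (η : S.C (p + 1)) (ζ : S.cells s) :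
    wilsonR S p q s η ∘ gaussG S h ζ = gaussG S h ζ ∘ wilsonR S p q s η := by
  funext ψ x; simp only [Function.comp_apply, wilsonR, gaussG]; ring

lemma wB_gaussR (S : CochainSystem N) (η : S.C (q + 1)) (σ : S.cells p) :
    wilsonB S p q s η ∘ gaussR S h σ = gaussR S h σ ∘ wilsonB S p q s η := by
  funext ψ x; simp only [Function.comp_apply, wilsonB, gaussR]; ring

lemma wB_gaussG (S : CochainSystem N) (η : S.C (q + 1)) (ζ : S.cells s) :
    wilsonB S p q s η ∘ gaussG S h ζ = gaussG S h ζ ∘ wilsonB S p q s η := by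
  funext ψ x; simp only [Function.comp_apply, wilsonB, gaussG]; ring

lemma wG_gaussR (S : CochainSystem N) (η : S.C (s + 1)) (σ : S.cells p) :
    wilsonG S p q s η ∘ gaussR S h σ = gaussR S h σ ∘ wilsonG S p q s η := by
  funext ψ x; simp only [Function.comp_apply, wilsonG, gaussR]; ring

lemma wG_gaussB (S : CochainSystem N) (η : S.C (s + 1)) (ξ : S.cells q) :
    wilsonG S p q s η ∘ gaussB S h ξ = gaussB S h ξ ∘ wilsonG S p q s η := by
  funext ψ x; simp only [Function.comp_apply, wilsonG, gaussB]; ring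

lemma wR_gaussR_iff (S : CochainSystem N) (η : S.C (p + 1)) :
    (∀ σ : S.cells p,
        wilsonR S p q s η ∘ gaussR S h σ = gaussR S h σ ∘ wilsonR S p q s η)
      ↔ bdry S p η = 0 := by
  constructor
  · intro hc
    funext σ
    have key := congrFun (congrFun (hc σ) (fun _ => (1 : ℂ))) (0, 0, 0)
    simp only [Function.comp_apply, wilsonR, gaussR, mul_one] at key
    rw [show (∑ τ : S.cells (p + 1), (0 : S.C (p + 1)) τ * η τ) = 0 by simp,
      sgn_zero, one_mul] at key
    have key2 : (1 : ℂ) = sgn (∑ τ : S.cells (p + 1),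
        ((0 : S.C (p + 1)) + S.d p (S.indicator σ)) τ * η τ) :=
      mul_left_cancel₀ (sgn_ne_zero _) (by rw [mul_one]; exact key)
    rw [show ((0 : S.C (p + 1)) + S.d p (S.indicator σ)) = S.d p (S.indicator σ) by
      simp] at key2
    have : (∑ τ : S.cells (p + 1), S.d p (S.indicator σ) τ * η τ) = 0 :=
      (sgn_eq_one_iff _).mp key2.symm
    simpa [bdry] using this
  · intro h0 σ
    funext ψ x
    simp only [Function.comp_apply, wilsonR, gaussR]
    have hsum : (∑ τ : S.cells (p + 1), (x.1 + S.d p (S.indicator σ)) τ * η τ)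
        = (∑ τ : S.cells (p + 1), x.1 τ * η τ) + bdry S p η σ := by
      simp [bdry, Pi.add_apply, add_mul, Finset.sum_add_distrib]
    rw [hsum, h0]
    simp only [Pi.zero_apply, add_zero]
    ring

lemma wB_gaussB_iff (S : CochainSystem N) (η : S.C (q + 1)) :
    (∀ ξ : S.cells q,
        wilsonB S p q s η ∘ gaussB S h ξ = gaussB S h ξ ∘ wilsonB S p q s η)
      ↔ bdry S q η = 0 := by
  constructor
  · intro hc
    funext ξ
    have key := congrFun (congrFun (hc ξ) (fun _ => (1 : ℂ))) (0, 0, 0)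
    simp only [Function.comp_apply, wilsonB, gaussB, mul_one] at key
    rw [show (∑ τ : S.cells (q + 1), (0 : S.C (q + 1)) τ * η τ) = 0 by simp,
      sgn_zero, one_mul] at key
    have key2 : (1 : ℂ) = sgn (∑ τ : S.cells (q + 1),
        ((0 : S.C (q + 1)) + S.d q (S.indicator ξ)) τ * η τ) :=
      mul_left_cancel₀ (sgn_ne_zero _) (by rw [mul_one]; exact key)
    rw [show ((0 : S.C (q + 1)) + S.d q (S.indicator ξ)) = S.d q (S.indicator ξ) by
      simp] at key2
    have : (∑ τ : S.cells (q + 1), S.d q (S.indicator ξ) τ * η τ) = 0 :=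
      (sgn_eq_one_iff _).mp key2.symm
    simpa [bdry] using this
  · intro h0 ξ
    funext ψ x
    simp only [Function.comp_apply, wilsonB, gaussB]
    have hsum : (∑ τ : S.cells (q + 1), (x.2.1 + S.d q (S.indicator ξ)) τ * η τ)
        = (∑ τ : S.cells (q + 1), x.2.1 τ * η τ) + bdry S q η ξ := by
      simp [bdry, Pi.add_apply, add_mul, Finset.sum_add_distrib]
    rw [hsum, h0]
    simp only [Pi.zero_apply, add_zero]
    ring

lemma wG_gaussG_iff (S : CochainSystem N) (η : S.C (s + 1)) :
    (∀ ζ : S.cells s,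
        wilsonG S p q s η ∘ gaussG S h ζ = gaussG S h ζ ∘ wilsonG S p q s η)
      ↔ bdry S s η = 0 := by
  constructor
  · intro hc
    funext ζ
    have key := congrFun (congrFun (hc ζ) (fun _ => (1 : ℂ))) (0, 0, 0)
    simp only [Function.comp_apply, wilsonG, gaussG, mul_one] at key
    rw [show (∑ τ : S.cells (s + 1), (0 : S.C (s + 1)) τ * η τ) = 0 by simp,
      sgn_zero, one_mul] at key
    have key2 : (1 : ℂ) = sgn (∑ τ : S.cells (s + 1),
        ((0 : S.C (s + 1)) + S.d s (S.indicator ζ)) τ * η τ) :=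
      mul_left_cancel₀ (sgn_ne_zero _) (by rw [mul_one]; exact key)
    rw [show ((0 : S.C (s + 1)) + S.d s (S.indicator ζ)) = S.d s (S.indicator ζ) by
      simp] at key2
    have : (∑ τ : S.cells (s + 1), S.d s (S.indicator ζ) τ * η τ) = 0 :=
      (sgn_eq_one_iff _).mp key2.symm
    simpa [bdry] using this
  · intro h0 ζ
    funext ψ x
    simp only [Function.comp_apply, wilsonG, gaussG]
    have hsum : (∑ τ : S.cells (s + 1), (x.2.2 + S.d s (S.indicator ζ)) τ * η τ)
        = (∑ τ : S.cells (s + 1), x.2.2 τ * η τ) + bdry S s η ζ := by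
      simp [bdry, Pi.add_apply, add_mul, Finset.sum_add_distrib]
    rw [hsum, h0]
    simp only [Pi.zero_apply, add_zero]
    ring

end Helpers

/-- **Z-type logical operators are supported on cycles.**  The boundary map `∂` is the
transpose of `d`; the Wilson operator `W^r_η` commutes with every flux operator and
with every dressed Gauss operator of colours `b` and `g`; it commutes with all red
dressed Gauss operators iff `∂η = 0`; hence it commutes with every stabilizer
generator exactly when `η` is a `ℤ₂` cycle.  The analogous statements hold for the
colours `b` and `g`. -/
theorem wilson_operators_and_cycles
    {N p q s : ℕ} (S : CochainSystem N) (h : p + 1 + (q + 1) + (s + 1) = N + 1) :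
    (∀ (i : ℕ) (x : S.C i) (y : S.C (i + 1)),
      (∑ τ : S.cells (i + 1), S.d i x τ * y τ) = ∑ σ : S.cells i, x σ * bdry S i y σ) ∧
    (∀ (η : S.C (p + 1)) (τ : S.cells (p + 2)),
      wilsonR S p q s η ∘ fluxR S p q s τ = fluxR S p q s τ ∘ wilsonR S p q s η) ∧
    (∀ (η : S.C (p + 1)) (τ' : S.cells (q + 2)),
      wilsonR S p q s η ∘ fluxB S p q s τ' = fluxB S p q s τ' ∘ wilsonR S p q s η) ∧
    (∀ (η : S.C (p + 1)) (τ'' : S.cells (s + 2)),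
      wilsonR S p q s η ∘ fluxG S p q s τ'' = fluxG S p q s τ'' ∘ wilsonR S p q s η) ∧
    (∀ (η : S.C (p + 1)) (ξ : S.cells q),
      wilsonR S p q s η ∘ gaussB S h ξ = gaussB S h ξ ∘ wilsonR S p q s η) ∧
    (∀ (η : S.C (p + 1)) (ζ : S.cells s),
      wilsonR S p q s η ∘ gaussG S h ζ = gaussG S h ζ ∘ wilsonR S p q s η) ∧
    (∀ η : S.C (p + 1),
      (∀ σ : S.cells p,
          wilsonR S p q s η ∘ gaussR S h σ = gaussR S h σ ∘ wilsonR S p q s η)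
        ↔ bdry S p η = 0) ∧
    (∀ η : S.C (p + 1),
      (∀ O ∈ Stabilizer S h, wilsonR S p q s η ∘ O = O ∘ wilsonR S p q s η)
        ↔ bdry S p η = 0) ∧
    (∀ η : S.C (q + 1),
      (∀ O ∈ Stabilizer S h, wilsonB S p q s η ∘ O = O ∘ wilsonB S p q s η)
        ↔ bdry S q η = 0) ∧
    (∀ η : S.C (s + 1),
      (∀ O ∈ Stabilizer S h, wilsonG S p q s η ∘ O = O ∘ wilsonG S p q s η)
        ↔ bdry S s η = 0) := by
  refine ⟨transpose_d S, wR_fluxR S, wR_fluxB S, wR_fluxG S, wR_gaussB h S,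
    wR_gaussG h S, wR_gaussR_iff h S, ?_, ?_, ?_⟩
  · intro η
    constructor
    · intro hc
      exact (wR_gaussR_iff h S η).mp fun σ => hc _ (Or.inl ⟨σ, rfl⟩)
    · rintro h0 O (⟨σ, rfl⟩ | ⟨ξ, rfl⟩ | ⟨ζ, rfl⟩ | ⟨τ, rfl⟩ | ⟨τ', rfl⟩ | ⟨τ'', rfl⟩)
      · exact (wR_gaussR_iff h S η).mpr h0 σ
      · exact wR_gaussB h S η ξ
      · exact wR_gaussG h S η ζ
      · exact wR_fluxR S η τ
      · exact wR_fluxB S η τ'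
      · exact wR_fluxG S η τ''
  · intro η
    constructor
    · intro hc
      exact (wB_gaussB_iff h S η).mp fun ξ => hc _ (Or.inr (Or.inl ⟨ξ, rfl⟩))
    · rintro h0 O (⟨σ, rfl⟩ | ⟨ξ, rfl⟩ | ⟨ζ, rfl⟩ | ⟨τ, rfl⟩ | ⟨τ', rfl⟩ | ⟨τ'', rfl⟩)
      · exact wB_gaussR h S η σ
      · exact (wB_gaussB_iff h S η).mpr h0 ξ
      · exact wB_gaussG h S η ζ
      · exact wB_fluxR S η τ
      · exact wB_fluxB S η τ'
      · exact wB_fluxG S η τ''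
  · intro η
    constructor
    · intro hc
      exact (wG_gaussG_iff h S η).mp fun ζ => hc _ (Or.inr (Or.inr (Or.inl ⟨ζ, rfl⟩)))
    · rintro h0 O (⟨σ, rfl⟩ | ⟨ξ, rfl⟩ | ⟨ζ, rfl⟩ | ⟨τ, rfl⟩ | ⟨τ', rfl⟩ | ⟨τ'', rfl⟩)
      · exact wG_gaussR h S η σ
      · exact wG_gaussB h S η ξ
      · exact (wG_gaussG_iff h S η).mpr h0 ζ
      · exact wG_fluxR S η τ
      · exact wG_fluxB S η τ'
      · exact wG_fluxG S η τ''
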